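/- arXiv:alg-geom/9608034 — 6 statements merged into one kernel-verified Lean document; each statement's English description precedes it below -/
import Mathlib

section
/- Let σ ⊆ ℝ^k be a strongly convex rational polyhedral cone, i.e., σ is the convex cone generated by finitely many vectors of ℤ^k and σ ∩ (−σ) = {0}. Then the set S_σ = σ^∨ ∩ ℤ^k, where σ^∨ = {u ∈ ℝ^k : ⟨u, v⟩ ≥ 0 for all v ∈ σ} is the dual cone, is a finitely generated additive monoid (with respect to vector addition). -/
/-!
The lattice points of `σ^∨` are the `u ∈ ℤ^k` with `⟨v i, u⟩ ≥ 0` for every generator `v i`.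
Writing `u = a - b` with `a, b ∈ ℕ^k` and recording the slacks `c i = ⟨v i, u⟩ ∈ ℕ`, this
monoid is the image of the monoid of `ℕ`-solutions `(a, b, c)` of `A (a - b) = c`, where `A` has
rows `v i`. That monoid is finitely generated by Dickson's lemma (`AddSubmonoid.fg_eqLocusM`),
hence so is its image.
-/

open Finset

section NonnegLocus

variable {M N : Type*} [AddMonoid M] [AddCommMonoid N] [PartialOrder N] [IsOrderedAddMonoid N]

def AddMonoidHom.nonnegLocus (L : M →+ N) : AddSubmonoid M where
  carrier := {x | 0 ≤ L x}
  zero_mem' := by simp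
  add_mem' {a b} ha hb := by simpa using add_nonneg ha hb

@[simp]
theorem AddMonoidHom.mem_nonnegLocus {L : M →+ N} {x : M} : x ∈ L.nonnegLocus ↔ 0 ≤ L x :=
  Iff.rfl

end NonnegLocus

section Gordan

variable {ι κ : Type*}

def natPairSub (ι : Type*) : (ι → ℕ) × (ι → ℕ) →+ (ι → ℤ) :=
  ((Nat.castAddMonoidHom ℤ).compLeft ι).comp (AddMonoidHom.fst _ _) -
    ((Nat.castAddMonoidHom ℤ).compLeft ι).comp (AddMonoidHom.snd _ _)

@[simp]
theorem natPairSub_apply (p : (ι → ℕ) × (ι → ℕ)) (i : ι) :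
    natPairSub ι p i = (p.1 i : ℤ) - p.2 i :=
  rfl

theorem map_eqLocusM_eq_nonnegLocus (L : (ι → ℤ) →+ (κ → ℤ)) :
    ((L.comp ((natPairSub ι).comp (AddMonoidHom.fst _ _))).eqLocusM
      (((Nat.castAddMonoidHom ℤ).compLeft κ).comp (AddMonoidHom.snd _ _))).map
        ((natPairSub ι).comp (AddMonoidHom.fst _ _)) = L.nonnegLocus := by
  ext u
  simp only [AddSubmonoid.mem_map, AddMonoidHom.mem_eqLocusM, AddMonoidHom.coe_comp,
    Function.comp_apply, AddMonoidHom.mem_nonnegLocus, Prod.exists, AddMonoidHom.coe_fst,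
    AddMonoidHom.coe_snd]
  constructor
  · rintro ⟨a, b, c, hc, rfl⟩
    rw [hc]
    exact fun j => Int.natCast_nonneg _
  · intro hu
    have hpair : natPairSub ι (fun i => (u i).toNat, fun i => (-u i).toNat) = u :=
      funext fun i => by simp only [natPairSub_apply, Int.toNat_sub_toNat_neg]
    refine ⟨fun i => (u i).toNat, fun i => (-u i).toNat, fun j => (L u j).toNat, ?_, hpair⟩
    rw [hpair]
    funext j
    simp [Int.toNat_of_nonneg (hu j)]

theorem AddMonoidHom.nonnegLocus_fg [Finite ι] [Finite κ] (L : (ι → ℤ) →+ (κ → ℤ)) :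
    L.nonnegLocus.FG := by
  rw [← map_eqLocusM_eq_nonnegLocus]
  exact (AddSubmonoid.fg_eqLocusM _ _).map _

end Gordan

theorem forall_mem_cone_nonneg_iff {R E ι : Type*} [Semiring R] [PartialOrder R]
    [IsOrderedRing R] [AddCommMonoid E] [Module R E] [Fintype ι] (ℓ : E →ₗ[R] R) (w : ι → E) :
    (∀ x ∈ {x | ∃ c : ι → R, (∀ i, 0 ≤ c i) ∧ x = ∑ i, c i • w i}, 0 ≤ ℓ x) ↔
      ∀ i, 0 ≤ ℓ (w i) := by
  classical
  constructor
  · intro h i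
    simpa using h (w i) ⟨Pi.single i 1, fun j => by simp [Pi.single_apply, apply_ite], by simp⟩
  · rintro h _ ⟨c, hc, rfl⟩
    simp only [map_sum, map_smul, smul_eq_mul]
    exact sum_nonneg fun i _ => mul_nonneg (hc i) (h i)

theorem forall_mem_cone_nonneg_iff_mem_nonnegLocus_mulVec {ι κ : Type*} [Fintype ι] [Fintype κ]
    (v : κ → ι → ℤ) (u : ι → ℤ) :
    (∀ x ∈ {x : ι → ℝ | ∃ c : κ → ℝ, (∀ i, 0 ≤ c i) ∧ x = ∑ i, c i • (fun j => (v i j : ℝ))},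
        0 ≤ ∑ j, (u j : ℝ) * x j) ↔
      u ∈ (Matrix.of v).mulVecLin.toAddMonoidHom.nonnegLocus := by
  refine (forall_mem_cone_nonneg_iff (dotProductBilin ℝ ℝ fun j => (u j : ℝ))
    fun i j => (v i j : ℝ)).trans ?_
  simp only [dotProductBilin_apply_apply, dotProduct, AddMonoidHom.mem_nonnegLocus, Pi.le_def,
    LinearMap.toAddMonoidHom_coe, Matrix.mulVecLin_apply, Matrix.mulVec, Pi.zero_apply,
    Matrix.of_apply]
  norm_cast
  simp only [mul_comm]

theorem gordan_dual_cone_lattice_points_fg_general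
    (k m : ℕ) (v : Fin m → (Fin k → ℤ)) (σ : Set (Fin k → ℝ))
    (hσ : σ = {x | ∃ c : Fin m → ℝ, (∀ i, 0 ≤ c i) ∧
      x = ∑ i, c i • (fun j => (v i j : ℝ))}) :
    ∃ T : Finset (Fin k → ℤ),
      {u : Fin k → ℤ | ∀ x ∈ σ, 0 ≤ ∑ j, (u j : ℝ) * x j} =
        ↑(AddSubmonoid.closure (T : Set (Fin k → ℤ))) := by
  subst hσ
  obtain ⟨T, hT⟩ := (Matrix.of v).mulVecLin.toAddMonoidHom.nonnegLocus_fg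
  refine ⟨T, Set.ext fun u => ?_⟩
  rw [hT]
  exact forall_mem_cone_nonneg_iff_mem_nonnegLocus_mulVec v u

/-- **Gordan's Lemma.** If `σ ⊆ ℝ^k` is a strongly convex rational polyhedral cone
(the convex cone generated by finitely many integer vectors, containing no nonzero
linear subspace), then `σ^∨ ∩ ℤ^k` is a finitely generated additive monoid. -/
theorem gordan_dual_cone_lattice_points_fg
    (k m : ℕ) (v : Fin m → (Fin k → ℤ)) (σ : Set (Fin k → ℝ))
    (hσ : σ = {x | ∃ c : Fin m → ℝ, (∀ i, 0 ≤ c i) ∧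
      x = ∑ i, c i • (fun j => (v i j : ℝ))})
    (hstrong : ∀ x ∈ σ, -x ∈ σ → x = 0) :
    ∃ T : Finset (Fin k → ℤ),
      {u : Fin k → ℤ | ∀ x ∈ σ, 0 ≤ ∑ j, (u j : ℝ) * x j} =
        ↑(AddSubmonoid.closure (T : Set (Fin k → ℤ))) :=
  gordan_dual_cone_lattice_points_fg_general k m v σ hσ
end

section
/- Let σ ⊆ ℝ^k be a rational polyhedral cone, i.e., the convex cone generated by finitely many vectors of ℤ^k. Then σ ∩ ℤ^k is a finitely generated additive monoid. -/
/-!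
A lattice point `u = ∑ cᵢ vᵢ` (`cᵢ ≥ 0`) of the cone splits as
`(u - ∑ ⌊cᵢ⌋ vᵢ) + ∑ ⌊cᵢ⌋ vᵢ`, and the first summand is a lattice point of the parallelepiped
`∑ [0, 1] vᵢ`. That parallelepiped is bounded, so it has finitely many lattice points; they
include the `vᵢ`, hence generate all lattice points of the cone.
-/

open Finset

namespace RationalCone

variable {ι κ : Type*}

def toReal (ι : Type*) : (ι → ℤ) →+ (ι → ℝ) := (Int.castAddHom ℝ).compLeft ι

@[simp] lemma toReal_apply (u : ι → ℤ) (j : ι) : toReal ι u j = u j := rfl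

variable [Fintype κ] (v : κ → ι → ℤ)

def latticePoints : AddSubmonoid (ι → ℤ) where
  carrier := {u | ∃ c : κ → ℝ, (∀ i, 0 ≤ c i) ∧ toReal ι u = ∑ i, c i • toReal ι (v i)}
  zero_mem' := ⟨0, fun _ => le_rfl, by simp⟩
  add_mem' := by
    rintro u u' ⟨c, hc, hu⟩ ⟨c', hc', hu'⟩
    refine ⟨c + c', fun i => add_nonneg (hc i) (hc' i), ?_⟩
    simp only [map_add, hu, hu', Pi.add_apply, add_smul, sum_add_distrib]

def parallelepipedPoints : Set (ι → ℤ) :=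
  {u | ∃ t : κ → ℝ, (∀ i, t i ∈ Set.Icc 0 1) ∧ toReal ι u = ∑ i, t i • toReal ι (v i)}

lemma parallelepipedPoints_subset_latticePoints :
    parallelepipedPoints v ⊆ latticePoints v :=
  fun _ ⟨t, ht, hu⟩ => ⟨t, fun i => (ht i).1, hu⟩

lemma generator_mem_parallelepipedPoints [DecidableEq κ] (i : κ) :
    v i ∈ parallelepipedPoints v := by
  refine ⟨Pi.single i 1, fun k => ?_, ?_⟩
  · rcases eq_or_ne k i with rfl | hk <;> simp [*]
  · simp [Pi.single_apply, ite_smul]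

lemma abs_le_sum_abs_of_mem_parallelepipedPoints {u : ι → ℤ} (hu : u ∈ parallelepipedPoints v)
    (j : ι) : |u j| ≤ ∑ i, |v i j| := by
  obtain ⟨t, ht, hu⟩ := hu
  have hj : (u j : ℝ) = ∑ i, t i * v i j := by simpa using congrFun hu j
  have : |(u j : ℝ)| ≤ ∑ i, |(v i j : ℝ)| := by
    rw [hj]
    refine (abs_sum_le_sum_abs _ _).trans (sum_le_sum fun i _ => ?_)
    rw [abs_mul, abs_of_nonneg (ht i).1]
    exact mul_le_of_le_one_left (abs_nonneg _) (ht i).2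
  exact_mod_cast this

lemma finite_parallelepipedPoints [Finite ι] : (parallelepipedPoints v).Finite :=
  (Set.Finite.pi fun j => Set.finite_Icc (-∑ i, |v i j|) (∑ i, |v i j|)).subset
    fun _ hu j _ => abs_le.mp (abs_le_sum_abs_of_mem_parallelepipedPoints v hu j)

lemma exists_eq_add_sum_nsmul_of_mem_latticePoints {u : ι → ℤ} (hu : u ∈ latticePoints v) :
    ∃ r ∈ parallelepipedPoints v, ∃ n : κ → ℕ, u = r + ∑ i, n i • v i := by
  obtain ⟨c, hc, hu⟩ := hu
  refine ⟨u - ∑ i, ⌊c i⌋₊ • v i, ⟨fun i => c i - ⌊c i⌋₊, fun i => ⟨?_, ?_⟩, ?_⟩,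
    fun i => ⌊c i⌋₊, (sub_add_cancel _ _).symm⟩
  · exact sub_nonneg.mpr (Nat.floor_le (hc i))
  · linarith [Nat.lt_floor_add_one (c i)]
  · simp only [map_sub, map_sum, map_nsmul, hu, sub_smul, sum_sub_distrib, Nat.cast_smul_eq_nsmul]

theorem latticePoints_eq_closure_parallelepipedPoints :
    latticePoints v = AddSubmonoid.closure (parallelepipedPoints v) := by
  classical
  refine le_antisymm (fun u hu => ?_)
    (AddSubmonoid.closure_le.mpr (parallelepipedPoints_subset_latticePoints v))
  obtain ⟨r, hr, n, rfl⟩ := exists_eq_add_sum_nsmul_of_mem_latticePoints v hu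
  exact add_mem (AddSubmonoid.subset_closure hr) <| sum_mem fun i _ =>
    nsmul_mem (AddSubmonoid.subset_closure (generator_mem_parallelepipedPoints v i)) _

theorem latticePoints_fg [Finite ι] : (latticePoints v).FG :=
  ⟨(finite_parallelepipedPoints v).toFinset, by
    rw [Set.Finite.coe_toFinset, latticePoints_eq_closure_parallelepipedPoints]⟩

end RationalCone

open RationalCone in
/-- If `σ ⊆ ℝ^k` is a rational polyhedral cone (the convex cone generated by finitely
many integer vectors), then `σ ∩ ℤ^k` is a finitely generated additive monoid. -/
theorem rational_polyhedral_cone_lattice_points_fg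
    (k m : ℕ) (v : Fin m → (Fin k → ℤ)) (σ : Set (Fin k → ℝ))
    (hσ : σ = {x | ∃ c : Fin m → ℝ, (∀ i, 0 ≤ c i) ∧
      x = ∑ i, c i • (fun j => (v i j : ℝ))}) :
    ∃ T : Finset (Fin k → ℤ),
      {u : Fin k → ℤ | (fun j => (u j : ℝ)) ∈ σ} =
        ↑(AddSubmonoid.closure (T : Set (Fin k → ℤ))) := by
  subst hσ
  obtain ⟨T, hT⟩ := latticePoints_fg v
  exact ⟨T, by rw [hT]; rfl⟩
end

section
/- Let v_1, …, v_s ∈ ℤ^k and a_1, …, a_s ∈ ℤ, and for each integer n ≥ 0 set P_n = {u ∈ ℝ^k : ⟨u, v_i⟩ ≥ −n·a_i for all i = 1, …, s}. Assume P_1 is bounded. Then the set S = {(u, n) ∈ ℤ^k × ℕ : ⟨u, v_i⟩ ≥ −n·a_i for all i = 1, …, s} is a finitely generated additive submonoid of ℤ^k × ℕ. -/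
/-!
The lattice points of the cone over `P₁` form the nonnegative part of a homomorphism
`F : ℤ^k × ℕ →+ ℤ^s`, so the statement is an instance of Gordan's lemma. To prove the latter,
present the finitely generated monoid `ℤ^k × ℕ` as the image of some `φ : ℕ^n → ℤ^k × ℕ` and record
the value of `F` in `s` extra slack coordinates: the nonnegative part of `F` is the image of the
submonoid of `ℕ^n × ℕ^s` on which `F ∘ φ` agrees with the slack, and that submonoid is finitely
generated by Dickson's lemma (`AddSubmonoid.fg_eqLocusM`).
-/

theorem AddSubmonoid.fg_comap_nonneg {G σ : Type*} [AddCommMonoid G] [AddMonoid.FG G] [Finite σ]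
    (F : G →+ (σ → ℤ)) : ((AddSubmonoid.nonneg (σ → ℤ)).comap F).FG := by
  obtain ⟨n, φ, hφ⟩ := Module.Finite.exists_fin' ℕ G
  let Ψ : (Fin n ⊕ σ → ℕ) →+ G :=
    φ.toAddMonoidHom.comp (LinearMap.funLeft ℕ ℕ Sum.inl).toAddMonoidHom
  let slack : (Fin n ⊕ σ → ℕ) →+ (σ → ℤ) :=
    (AddMonoidHom.compLeft (Nat.castAddMonoidHom ℤ) σ).comp
      (LinearMap.funLeft ℕ ℕ Sum.inr).toAddMonoidHom
  suffices h : (AddSubmonoid.nonneg (σ → ℤ)).comap F = ((F.comp Ψ).eqLocusM slack).map Ψ by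
    rw [h]
    exact (AddSubmonoid.fg_eqLocusM _ _).map Ψ
  ext x
  constructor
  · intro hx
    obtain ⟨d, rfl⟩ := hφ x
    refine ⟨Sum.elim d fun i => (F (φ d) i).toNat, ?_, rfl⟩
    funext i
    exact (Int.toNat_of_nonneg (AddSubmonoid.mem_nonneg.mp (AddSubmonoid.mem_comap.mp hx) i)).symm
  · rintro ⟨c, hc : F (Ψ c) = slack c, rfl⟩
    rw [AddSubmonoid.mem_comap, AddSubmonoid.mem_nonneg, hc]
    exact fun i => Int.natCast_nonneg _

theorem polytope_cone_lattice_points_fg_general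
    (k s : ℕ) (v : Fin s → (Fin k → ℤ)) (a : Fin s → ℤ) :
    ∃ T : Finset ((Fin k → ℤ) × ℕ),
      {p : (Fin k → ℤ) × ℕ | ∀ i, -((p.2 : ℤ) * a i) ≤ ∑ j, p.1 j * v i j} =
        ↑(AddSubmonoid.closure (T : Set ((Fin k → ℤ) × ℕ))) := by
  let F : (Fin k → ℤ) × ℕ →+ (Fin s → ℤ) :=
    { toFun := fun p i => p.2 * a i + ∑ j, p.1 j * v i j
      map_zero' := by funext; simp
      map_add' := fun p q => by
        funext i
        simp only [Prod.fst_add, Prod.snd_add, Pi.add_apply, add_mul, Finset.sum_add_distrib,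
          Nat.cast_add]
        ring }
  obtain ⟨T, hT⟩ := AddSubmonoid.fg_comap_nonneg F
  refine ⟨T, ?_⟩
  rw [hT]
  ext p
  simp only [Set.mem_ofPred_eq, SetLike.mem_coe, AddSubmonoid.mem_comap, AddSubmonoid.mem_nonneg,
    Pi.le_def, Pi.zero_apply, F, AddMonoidHom.coe_mk, ZeroHom.coe_mk, neg_le_iff_add_nonneg']

/-- Let `v₁, …, vₛ ∈ ℤ^k`, `a₁, …, aₛ ∈ ℤ`, and `Pₙ = {u ∈ ℝ^k | ⟨u, vᵢ⟩ ≥ -n·aᵢ}`.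
If `P₁` is bounded, then `S = {(u, n) ∈ ℤ^k × ℕ | ⟨u, vᵢ⟩ ≥ -n·aᵢ for all i}`
is a finitely generated additive submonoid of `ℤ^k × ℕ`. -/
theorem polytope_cone_lattice_points_fg
    (k s : ℕ) (v : Fin s → (Fin k → ℤ)) (a : Fin s → ℤ)
    (hbdd : Bornology.IsBounded
      {u : Fin k → ℝ | ∀ i, -(a i : ℝ) ≤ ∑ j, u j * (v i j : ℝ)}) :
    ∃ T : Finset ((Fin k → ℤ) × ℕ),
      {p : (Fin k → ℤ) × ℕ | ∀ i, -((p.2 : ℤ) * a i) ≤ ∑ j, p.1 j * v i j} =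
        ↑(AddSubmonoid.closure (T : Set ((Fin k → ℤ) × ℕ))) :=
  polytope_cone_lattice_points_fg_general k s v a
end

section
/- Let K be a field, let v_1, …, v_s ∈ ℤ^k and a_1, …, a_s ∈ ℤ, and set S = {(u, n) ∈ ℤ^k × ℕ : ⟨u, v_i⟩ ≥ −n·a_i for all i = 1, …, s}, an additive submonoid of ℤ^k × ℕ. Assume P_1 = {u ∈ ℝ^k : ⟨u, v_i⟩ ≥ −a_i for all i} is bounded. Then the monoid algebra K[S] (the K-algebra with K-basis the elements of S and multiplication induced by addition in S) is a finitely generated K-algebra. -/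
/-!
Since `K[S]` is generated by the monomials of a generating set of `S`, it suffices that `S` is a
finitely generated monoid (Gordan's lemma). `S` is cut out of the finitely generated monoid
`ℤ^k × ℕ` by finitely many inequalities `0 ≤ ℓᵢ`, with `ℓᵢ` additive. Pulling back along a
surjection `ℕ^m → ℤ^k × ℕ` and adding a slack variable `tᵢ = ℓᵢ` for each inequality, the cone
becomes the projection of the solution monoid of a system of linear equations in `ℕ^m × ℕ^s`.
That monoid is closed under differences, so its minimal nonzero elements generate it, and by
Dickson's lemma there are finitely many of them.
-/

theorem AddMonoid.FG.exists_surjective_pi_nat (M : Type*) [AddCommMonoid M] [AddMonoid.FG M] :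
    ∃ (s : Finset M) (φ : (s → ℕ) →+ M), Function.Surjective φ := by
  obtain ⟨s, hs⟩ := AddMonoid.FG.fg_top (M := M)
  refine ⟨s,
    { toFun := fun n => ∑ i : s, n i • (i : M)
      map_zero' := by simp
      map_add' := fun m n => by simp [add_smul, Finset.sum_add_distrib] }, fun x => ?_⟩
  obtain ⟨n, hn⟩ := AddSubmonoid.mem_closure_finset'.1 (hs ▸ AddSubmonoid.mem_top x)
  exact ⟨n, hn.symm⟩

namespace AddSubmonoid

variable {M κ : Type*} [AddCommMonoid M]

def nonnegLocus (ℓ : κ → M →+ ℤ) : AddSubmonoid M where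
  carrier := {x | ∀ i, 0 ≤ ℓ i x}
  zero_mem' i := by simp
  add_mem' hx hy i := by simpa using add_nonneg (hx i) (hy i)

@[simp]
theorem mem_nonnegLocus {ℓ : κ → M →+ ℤ} {x : M} : x ∈ nonnegLocus ℓ ↔ ∀ i, 0 ≤ ℓ i x :=
  Iff.rfl

theorem comap_nonnegLocus {N : Type*} [AddCommMonoid N] (φ : N →+ M) (ℓ : κ → M →+ ℤ) :
    (nonnegLocus ℓ).comap φ = nonnegLocus fun i => (ℓ i).comp φ :=
  rfl

variable [Finite κ]

theorem fg_nonnegLocus_of_wellQuasiOrderedLE [PartialOrder M] [WellQuasiOrderedLE M]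
    [IsOrderedCancelAddMonoid M] [CanonicallyOrderedAdd M] (ℓ : κ → M →+ ℤ) :
    (nonnegLocus ℓ).FG := by
  let value : M × (κ → ℕ) →+ (κ → ℤ) := AddMonoidHom.pi fun i => (ℓ i).comp (.fst _ _)
  let slack : M × (κ → ℕ) →+ (κ → ℤ) := ((Nat.castAddMonoidHom ℤ).compLeft κ).comp (.snd _ _)
  convert (fg_eqLocusM value slack).map (.fst _ _)
  ext x
  simp only [mem_nonnegLocus, mem_map, AddMonoidHom.mem_eqLocusM]
  constructor
  · intro hx
    refine ⟨(x, fun i => (ℓ i x).toNat), funext fun i => ?_, rfl⟩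
    simp [value, slack, hx i]
  · rintro ⟨⟨x, t⟩, h, rfl⟩ i
    have : ℓ i x = t i := congr_fun h i
    simp [this]

theorem fg_nonnegLocus [AddMonoid.FG M] (ℓ : κ → M →+ ℤ) : (nonnegLocus ℓ).FG := by
  obtain ⟨s, φ, hφ⟩ := AddMonoid.FG.exists_surjective_pi_nat M
  rw [← map_comap_eq_of_surjective hφ (nonnegLocus ℓ), comap_nonnegLocus]
  exact (fg_nonnegLocus_of_wellQuasiOrderedLE _).map φ

end AddSubmonoid

def facetForm {ι σ : Type*} [Fintype ι] (v : σ → ι → ℤ) (a : σ → ℤ) (i : σ) :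
    (ι → ℤ) × ℕ →+ ℤ where
  toFun p := ∑ j, p.1 j * v i j + p.2 * a i
  map_zero' := by simp
  map_add' p q := by
    simp only [Prod.fst_add, Prod.snd_add, Pi.add_apply, add_mul, Finset.sum_add_distrib,
      Nat.cast_add]
    ring

theorem monoidAlgebra_section_ring_finiteType_general
    (K : Type*) [Field K] (k s : ℕ) (v : Fin s → (Fin k → ℤ)) (a : Fin s → ℤ)
    (S : AddSubmonoid ((Fin k → ℤ) × ℕ))
    (hS : (S : Set ((Fin k → ℤ) × ℕ)) =
      {p : (Fin k → ℤ) × ℕ | ∀ i, -((p.2 : ℤ) * a i) ≤ ∑ j, p.1 j * v i j}) :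
    Algebra.FiniteType K (AddMonoidAlgebra K S) := by
  have hS_eq : S = AddSubmonoid.nonnegLocus (facetForm v a) := by
    refine SetLike.coe_injective (hS.trans (Set.ext fun p => ?_))
    simp [facetForm, neg_le_iff_add_nonneg]
  have : AddMonoid.FG S :=
    (AddMonoid.fg_iff_addSubmonoid_fg S).2 (hS_eq ▸ AddSubmonoid.fg_nonnegLocus _)
  infer_instance

/-- Let `K` be a field, `v₁, …, vₛ ∈ ℤ^k`, `a₁, …, aₛ ∈ ℤ`, and let `S` be the additive
submonoid `{(u, n) ∈ ℤ^k × ℕ | ⟨u, vᵢ⟩ ≥ -n·aᵢ for all i}` of `ℤ^k × ℕ`. If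
`P₁ = {u ∈ ℝ^k | ⟨u, vᵢ⟩ ≥ -aᵢ}` is bounded, then the monoid algebra `K[S]`
is a finitely generated `K`-algebra. -/
theorem monoidAlgebra_section_ring_finiteType
    (K : Type*) [Field K] (k s : ℕ) (v : Fin s → (Fin k → ℤ)) (a : Fin s → ℤ)
    (S : AddSubmonoid ((Fin k → ℤ) × ℕ))
    (hS : (S : Set ((Fin k → ℤ) × ℕ)) =
      {p : (Fin k → ℤ) × ℕ | ∀ i, -((p.2 : ℤ) * a i) ≤ ∑ j, p.1 j * v i j})
    (hbdd : Bornology.IsBounded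
      {u : Fin k → ℝ | ∀ i, -(a i : ℝ) ≤ ∑ j, u j * (v i j : ℝ)}) :
    Algebra.FiniteType K (AddMonoidAlgebra K S) :=
  monoidAlgebra_section_ring_finiteType_general K k s v a S hS
end

section
/- Let P ⊆ ℝ^k be a bounded polytope which is the convex hull of finitely many points of ℚ^k, and let C ⊆ ℝ^{k+1} be the closed convex cone generated by P × {1} = {(u, 1) : u ∈ P}. Then C ∩ ℤ^{k+1} is a finitely generated additive monoid. -/
/-!
Since `P` is compact, the cone over `P × {1}` is already closed, and it is generated by the
finitely many points `(v, 1)`, `v ∈ V`. Scaling each of them by a positive integer gives lattice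
generators `w_v`. Gordan's argument then applies: a lattice point `∑ c_v • w_v` with `c_v ≥ 0` is
`∑ ⌊c_v⌋ • w_v` plus a lattice point of the bounded parallelepiped `{∑ t_v • w_v | 0 ≤ t_v ≤ 1}`,
and there are only finitely many of those.
-/

open Filter Finset PointedCone

section ConeOverSlice

variable {E : Type*} [AddCommGroup E] [Module ℝ E]

lemma PointedCone.mem_hull_image_finset_iff {ι : Type*} {v : ι → E} {s : Finset ι}
    {x : E} : x ∈ hull ℝ (v '' s) ↔ ∃ c : ι → ℝ, (∀ i, 0 ≤ c i) ∧ ∑ i ∈ s, c i • v i = x := by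
  rw [Submodule.mem_span_image_finset_iff_exists_fun']
  constructor
  · rintro ⟨c, rfl⟩
    exact ⟨fun i => c i, fun i => (c i).2, rfl⟩
  · rintro ⟨c, hc, rfl⟩
    exact ⟨fun i => ⟨c i, hc i⟩, rfl⟩

lemma PointedCone.hull_convexHull (s : Set E) : hull ℝ (convexHull ℝ s) = hull ℝ s :=
  le_antisymm (Submodule.span_le.mpr (convexHull_min Submodule.subset_span (hull ℝ s).convex))
    (Submodule.span_mono (subset_convexHull ℝ s))

lemma PointedCone.hull_convexHull_prod_one (s : Set E) :
    hull ℝ (convexHull ℝ s ×ˢ ({1} : Set ℝ)) = hull ℝ (s ×ˢ ({1} : Set ℝ)) := by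
  rw [← hull_convexHull (s ×ˢ _), convexHull_prod, convexHull_singleton]

lemma PointedCone.hull_image_smul {ι : Type*} (v : ι → E) {c : ι → ℝ} {s : Set ι}
    (hc : ∀ i ∈ s, 0 < c i) : hull ℝ ((fun i => c i • v i) '' s) = hull ℝ (v '' s) := by
  refine le_antisymm (Submodule.span_le.mpr ?_) (Submodule.span_le.mpr ?_)
  · rintro _ ⟨i, hi, rfl⟩
    exact (hull ℝ (v '' s)).smul_mem (hc i hi).le (subset_hull ⟨i, hi, rfl⟩)
  · rintro _ ⟨i, hi, rfl⟩
    have : v i = (c i)⁻¹ • c i • v i := by rw [inv_smul_smul₀ (hc i hi).ne']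
    rw [SetLike.mem_coe, this]
    exact smul_mem _ (inv_nonneg.mpr (hc i hi).le) (subset_hull ⟨i, hi, rfl⟩)

lemma PointedCone.coe_hull_prod_one (s : Set E) :
    (hull ℝ (s ×ˢ ({1} : Set ℝ)) : Set (E × ℝ)) =
      {x | ∃ (m : ℕ) (c : Fin m → ℝ) (p : Fin m → E),
        (∀ i, 0 ≤ c i) ∧ (∀ i, p i ∈ s) ∧ x = ∑ i, c i • (p i, (1 : ℝ))} := by
  ext x
  simp only [SetLike.mem_coe, Submodule.mem_span_set', Set.mem_ofPred_eq]
  constructor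
  · rintro ⟨m, c, v, rfl⟩
    refine ⟨m, fun i => c i, fun i => (v i : E × ℝ).1, fun i => (c i).2,
      fun i => (v i).2.1, Finset.sum_congr rfl fun i _ => ?_⟩
    have h1 : (v i : E × ℝ).2 = 1 := (v i).2.2
    exact Prod.ext rfl (by simp [h1])
  · rintro ⟨m, c, p, hc, hp, rfl⟩
    exact ⟨m, fun i => ⟨c i, hc i⟩, fun i => ⟨(p i, 1), hp i, rfl⟩, rfl⟩

lemma PointedCone.coe_hull_prod_one_eq_image {K : Set E} (hK : Convex ℝ K) (hne : K.Nonempty) :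
    (hull ℝ (K ×ˢ ({1} : Set ℝ)) : Set (E × ℝ)) =
      (fun tp : ℝ × E => tp.1 • (tp.2, (1 : ℝ))) '' (Set.Ici 0 ×ˢ K) := by
  refine subset_antisymm (fun x hx => ?_) ?_
  · induction hx using Submodule.span_induction with
    | mem x hx =>
      have h1 : x.2 = 1 := hx.2
      exact ⟨(1, x.1), ⟨Set.mem_Ici.mpr zero_le_one, hx.1⟩,
        Prod.ext (one_smul _ _) (by simp [h1])⟩
    | zero =>
      obtain ⟨p, hp⟩ := hne
      exact ⟨(0, p), ⟨le_refl (0 : ℝ), hp⟩, zero_smul _ _⟩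
    | add x y _ _ hx hy =>
      obtain ⟨⟨t, p⟩, ⟨ht : 0 ≤ t, hp⟩, rfl⟩ := hx
      obtain ⟨⟨u, q⟩, ⟨hu : 0 ≤ u, hq⟩, rfl⟩ := hy
      rcases (add_nonneg ht hu).eq_or_lt with htu | htu
      · obtain ⟨rfl, rfl⟩ : t = 0 ∧ u = 0 := ⟨by linarith, by linarith⟩
        exact ⟨(0, p), ⟨le_refl (0 : ℝ), hp⟩, by simp⟩
      refine ⟨(t + u, (t / (t + u)) • p + (u / (t + u)) • q),
        ⟨htu.le, hK hp hq (by positivity) (by positivity) (by field_simp)⟩, Prod.ext ?_ ?_⟩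
      · simp only [Prod.smul_fst, Prod.fst_add, smul_add, smul_smul, mul_div_cancel₀ _ htu.ne']
      · simp
    | smul a x _ hx =>
      obtain ⟨⟨t, p⟩, ⟨ht : 0 ≤ t, hp⟩, rfl⟩ := hx
      exact ⟨(a * t, p), ⟨mul_nonneg a.2 ht, hp⟩, by simp [mul_smul]⟩
  · rintro _ ⟨⟨t, p⟩, ⟨ht, hp⟩, rfl⟩
    exact smul_mem _ ht (subset_hull ⟨hp, rfl⟩)

lemma isClosed_image_smul_prod_one [TopologicalSpace E] [ContinuousSMul ℝ E] [T2Space E]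
    {K : Set E} (hK : IsCompact K) :
    IsClosed ((fun tp : ℝ × E => tp.1 • (tp.2, (1 : ℝ))) '' (Set.Ici 0 ×ˢ K)) := by
  set g := fun tp : ℝ × E => tp.1 • (tp.2, (1 : ℝ))
  have hg : Continuous g := continuous_fst.smul (continuous_snd.prodMk continuous_const)
  refine closure_subset_iff_isClosed.mp fun x hx => ?_
  -- Near `x` the cone coincides with the compact piece of height at most `x.2 + 1`.
  have hU : IsOpen {y : E × ℝ | y.2 < x.2 + 1} := isOpen_lt continuous_snd continuous_const
  have hsub : {y : E × ℝ | y.2 < x.2 + 1} ∩ g '' (Set.Ici 0 ×ˢ K) ⊆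
      g '' (Set.Icc 0 (x.2 + 1) ×ˢ K) := by
    rintro _ ⟨hlt, ⟨t, p⟩, ⟨ht, hp⟩, rfl⟩
    have hlt' : t < x.2 + 1 := by simpa [g] using hlt
    exact ⟨(t, p), ⟨⟨ht, hlt'.le⟩, hp⟩, rfl⟩
  have hcl : IsClosed (g '' (Set.Icc 0 (x.2 + 1) ×ˢ K)) :=
    ((isCompact_Icc.prod hK).image hg).isClosed
  obtain ⟨tp, htp, rfl⟩ := hcl.closure_subset_iff.mpr hsub
    (hU.inter_closure ⟨lt_add_one x.2, hx⟩)
  exact ⟨tp, ⟨htp.1.1, htp.2⟩, rfl⟩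

lemma PointedCone.isClosed_hull_prod_one [TopologicalSpace E] [ContinuousSMul ℝ E] [T2Space E]
    {K : Set E} (hK : IsCompact K) (hKc : Convex ℝ K) :
    IsClosed (hull ℝ (K ×ˢ ({1} : Set ℝ)) : Set (E × ℝ)) := by
  rcases K.eq_empty_or_nonempty with rfl | hne
  · simp
  · rw [coe_hull_prod_one_eq_image hKc hne]
    exact isClosed_image_smul_prod_one hK

end ConeOverSlice

theorem exists_finset_closure_eq_preimage_hull {G E : Type*} [AddCommGroup G]
    [NormedAddCommGroup E] [NormedSpace ℝ E] [ProperSpace E] (φ : G →+ E)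
    (hφ : Tendsto φ cofinite (cocompact E)) (s : Finset G) :
    ∃ T : Finset G, φ ⁻¹' (hull ℝ (φ '' s) : Set E) = AddSubmonoid.closure (T : Set G) := by
  set B := ∑ w ∈ s, ‖φ w‖
  set T := {g | ‖φ g‖ ≤ B ∧ φ g ∈ hull ℝ (φ '' s)}
  have hT : T.Finite :=
    (tendsto_cofinite_cocompact_iff.mp hφ _ (isCompact_closedBall 0 B)).subset
      fun g hg => by simpa using hg.1
  refine ⟨hT.toFinset, subset_antisymm (fun g hg => ?_) ?_⟩
  · have hmemT : ∀ g ∈ T, g ∈ AddSubmonoid.closure (hT.toFinset : Set G) := fun g hg =>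
      AddSubmonoid.subset_closure (by simpa using hg)
    obtain ⟨c, hc, hcg⟩ := mem_hull_image_finset_iff.mp hg
    set n : G → ℕ := fun w => ⌊c w⌋₊
    set r := g - ∑ w ∈ s, n w • w
    have hr : φ r = ∑ w ∈ s, (c w - n w) • φ w := by
      simp only [r, map_sub, map_sum, map_nsmul, ← hcg, sub_smul, sum_sub_distrib,
        Nat.cast_smul_eq_nsmul]
    have hfrac : ∀ w, 0 ≤ c w - n w ∧ c w - n w ≤ 1 := fun w =>
      ⟨sub_nonneg.mpr (Nat.floor_le (hc w)), by linarith [Nat.lt_floor_add_one (c w)]⟩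
    have hrT : r ∈ T := by
      refine ⟨?_, mem_hull_image_finset_iff.mpr ⟨_, fun w => (hfrac w).1, hr.symm⟩⟩
      rw [hr]
      refine (norm_sum_le _ _).trans (sum_le_sum fun w _ => ?_)
      rw [norm_smul, Real.norm_of_nonneg (hfrac w).1]
      exact mul_le_of_le_one_left (norm_nonneg _) (hfrac w).2
    have hwT : ∀ w ∈ s, w ∈ T := fun w hw =>
      ⟨single_le_sum (fun w _ => norm_nonneg (φ w)) hw, subset_hull ⟨w, hw, rfl⟩⟩
    rw [SetLike.mem_coe, ← sub_add_cancel g (∑ w ∈ s, n w • w)]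
    exact add_mem (hmemT r hrT) (sum_mem fun w hw => nsmul_mem (hmemT w (hwT w hw)) _)
  · exact (AddSubmonoid.closure_le (S := (hull ℝ (φ '' s)).toAddSubmonoid.comap φ)).mpr
      fun g hg => (hT.mem_toFinset.mp hg).2

def intCastProd (ι : Type*) : (ι → ℤ) × ℤ →+ (ι → ℝ) × ℝ :=
  (AddMonoidHom.compLeft (Int.castAddHom ℝ) ι).prodMap (Int.castAddHom ℝ)

lemma tendsto_intCastProd_cofinite_cocompact (ι : Type*) [Finite ι] :
    Tendsto (intCastProd ι) cofinite (cocompact _) := by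
  have hpi : Tendsto (fun z : ι → ℤ => fun j => (z j : ℝ)) cofinite (cocompact _) := by
    rw [← coprodᵢ_cofinite, ← coprodᵢ_cocompact]
    exact Tendsto.pi_map_coprodᵢ fun _ => Int.tendsto_coe_cofinite
  rw [← coprod_cofinite, ← coprod_cocompact]
  exact hpi.prodMap_coprod Int.tendsto_coe_cofinite

lemma exists_intCast_eq_nat_mul {ι : Type*} [Fintype ι] (q : ι → ℚ) :
    ∃ (z : ι → ℤ) (n : ℕ), 0 < n ∧ ∀ j, (z j : ℚ) = n * q j := by
  set N := ∏ i, (q i).den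
  refine ⟨fun j => (q j).num * (N / (q j).den : ℕ), N, prod_pos fun i _ => (q i).pos,
    fun j => ?_⟩
  obtain ⟨e, he⟩ : (q j).den ∣ N := dvd_prod_of_mem _ (mem_univ j)
  dsimp only
  rw [he, Nat.mul_div_cancel_left _ (q j).pos, Int.cast_mul, Int.cast_natCast, Nat.cast_mul,
    ← Rat.mul_den_eq_num]
  ring

/-- Let `P ⊆ ℝ^k` be a bounded polytope which is the convex hull of finitely many
points of `ℚ^k`, and let `C ⊆ ℝ^{k+1} = ℝ^k × ℝ` be the closed convex cone generated
by `P × {1}` (the closure of the set of finite nonnegative combinations of elements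
of `P × {1}`). Then `C ∩ ℤ^{k+1}` is a finitely generated additive monoid. -/
theorem closed_cone_over_rational_polytope_lattice_points_fg
    (k : ℕ) (V : Finset (Fin k → ℚ))
    (P : Set (Fin k → ℝ))
    (hP : P = convexHull ℝ ((fun q : Fin k → ℚ => fun j => (q j : ℝ)) '' ↑V))
    (C : Set ((Fin k → ℝ) × ℝ))
    (hC : C = closure {x | ∃ (m : ℕ) (c : Fin m → ℝ) (p : Fin m → (Fin k → ℝ)),
      (∀ i, 0 ≤ c i) ∧ (∀ i, p i ∈ P) ∧ x = ∑ i, c i • (p i, (1 : ℝ))}) :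
    ∃ T : Finset ((Fin k → ℤ) × ℤ),
      {z : (Fin k → ℤ) × ℤ | ((fun j => (z.1 j : ℝ)), (z.2 : ℝ)) ∈ C} =
        ↑(AddSubmonoid.closure (T : Set ((Fin k → ℤ) × ℤ))) := by
  set φ := intCastProd (Fin k)
  set f : (Fin k → ℚ) → Fin k → ℝ := fun q j => (q j : ℝ)
  choose z n hn hz using fun q : Fin k → ℚ => exists_intCast_eq_nat_mul q
  have hφz : ∀ q, φ (z q, (n q : ℤ)) = (n q : ℝ) • (f q, (1 : ℝ)) := fun q =>
    Prod.ext (funext fun j => by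
        simpa [φ, intCastProd, f] using congrArg (Rat.cast : ℚ → ℝ) (hz q j))
      (by simp [φ, intCastProd])
  have hgen : hull ℝ (φ '' ↑(V.image fun q => (z q, (n q : ℤ)))) =
      hull ℝ ((f '' V) ×ˢ ({1} : Set ℝ)) := by
    rw [coe_image, Set.image_image, Set.image_congr fun q _ => hφz q,
      hull_image_smul _ fun q _ => Nat.cast_pos.mpr (hn q), Set.prod_singleton, Set.image_image]
  have hCeq : C = hull ℝ (P ×ˢ ({1} : Set ℝ)) := by
    have hPcpt : IsCompact P := hP ▸ (V.finite_toSet.image _).isCompact_convexHull (𝕜 := ℝ)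
    have hPconv : Convex ℝ P := hP ▸ convex_convexHull ℝ _
    rw [hC, ← coe_hull_prod_one, (isClosed_hull_prod_one hPcpt hPconv).closure_eq]
  obtain ⟨T, hT⟩ := exists_finset_closure_eq_preimage_hull φ
    (tendsto_intCastProd_cofinite_cocompact _) (V.image fun q => (z q, (n q : ℤ)))
  refine ⟨T, ?_⟩
  rw [← hT, hgen, ← hull_convexHull_prod_one, ← hP, hCeq]
  rfl
end

section
/- Let v_1, …, v_s ∈ ℤ^k and a_1, …, a_s ∈ ℤ, and for each integer n ≥ 0 set P_n = {u ∈ ℝ^k : ⟨u, v_i⟩ ≥ −n·a_i for all i = 1, …, s}. Assume P_1 is bounded, so each set P_n ∩ ℤ^k is finite. Then the generating function ∑_{n ≥ 0} card(P_n ∩ ℤ^k) · t^n is a rational power series: there exist polynomials p(t), q(t) ∈ ℚ[t] with q(0) ≠ 0 such that q(t) · ∑_{n ≥ 0} card(P_n ∩ ℤ^k) · t^n = p(t) as formal power series over ℚ. -/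
/-!
Homogenize: the pairs `(n, σ)`, where `σ ∈ ℕ^s` is the slack vector `(⟨u, vᵢ⟩ + n aᵢ)ᵢ` of a
lattice point `u` of `n • P`, form a submonoid of `ℕ × ℕ^s` closed under differences, hence
finitely generated by Dickson's lemma. When `P` is bounded and nonempty its recession cone is
trivial, so `u` is determined by its slack vector and `card (Pₙ ∩ ℤ^k)` is the Hilbert function
of a finitely generated, positively graded monoid.

For such a monoid with generators `g₁, …, g_r`, the lexicographically minimal exponent vectors in
the fibres of `c ↦ ∑ cᵢ gᵢ` form a lower set of `ℕ^r`. Its complement is the upper closure of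
finitely many points (Dickson again), so by inclusion–exclusion its generating function, weighted
by `deg gᵢ`, is a polynomial times `∏ (1 - t ^ deg gᵢ)⁻¹`.
-/

open Finset Matrix PowerSeries
open scoped Classical

def PowerSeries.IsRational (f : PowerSeries ℚ) : Prop :=
  ∃ p q : Polynomial ℚ, q.coeff 0 ≠ 0 ∧ (q : PowerSeries ℚ) * f = p

theorem PowerSeries.isRational_mk_of_forall_pos_eq_zero (f : ℕ → ℚ) (hf : ∀ n, 0 < n → f n = 0) :
    (PowerSeries.mk f).IsRational := by
  refine ⟨Polynomial.C (f 0), 1, by simp, ?_⟩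
  ext (_ | n)
  · simp
  · simp [hf]

theorem Finset.prod_one_sub_ite_le {α R : Type*} [SemilatticeSup α] [OrderBot α] [CommRing R]
    (F : Finset α) (c : α) :
    ∏ m ∈ F, (1 - if m ≤ c then (1 : R) else 0) =
      ∑ S ∈ F.powerset, (-1) ^ #S * if S.sup id ≤ c then 1 else 0 := by
  simp_rw [sub_eq_neg_add, prod_add, prod_const_one, mul_one, prod_neg, prod_boole,
    Finset.sup_le_iff, id]

theorem IsLowerSet.exists_finset_mem_iff {α : Type*} [PartialOrder α] [WellQuasiOrderedLE α]
    {A : Set α} (hA : IsLowerSet A) : ∃ F : Finset α, ∀ c, c ∈ A ↔ ∀ m ∈ F, ¬m ≤ c := by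
  have hfin : {m | Minimal (· ∉ A) m}.Finite :=
    (setOfPred_minimal_antichain _).finite_of_partiallyWellOrderedOn
      (Set.isPWO_of_wellQuasiOrderedLE _)
  refine ⟨hfin.toFinset, fun c => ⟨fun hc m hm hmc => ?_, fun h => by_contra fun hc => ?_⟩⟩
  · have hm' : Minimal (· ∉ A) m := hfin.mem_toFinset.1 hm
    exact hm'.prop (hA hmc hc)
  · obtain ⟨m, hmc, hm⟩ := exists_minimal_le_of_wellFoundedLT (· ∉ A) c hc
    exact h m (hfin.mem_toFinset.2 hm) hmc

section WeightSeries

variable {ι : Type*} [Fintype ι] (d : ι → ℕ)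

noncomputable def weightSlice (n : ℕ) : Finset (ι → ℕ) :=
  {c ∈ Fintype.piFinset fun _ => range (n + 1) | c ⬝ᵥ d = n}

variable {d}

theorem mem_weightSlice (hd : ∀ i, 0 < d i) {n : ℕ} {c : ι → ℕ} :
    c ∈ weightSlice d n ↔ c ⬝ᵥ d = n := by
  refine ⟨fun h => (mem_filter.1 h).2, fun h => mem_filter.2 ⟨?_, h⟩⟩
  refine Fintype.mem_piFinset.2 fun i => mem_range.2 (Nat.lt_succ_of_le ?_)
  calc c i ≤ c i * d i := Nat.le_mul_of_pos_right _ (hd i)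
    _ ≤ c ⬝ᵥ d := single_le_sum (f := fun i => c i * d i) (fun _ _ => Nat.zero_le _) (mem_univ i)
    _ = n := h

variable (d)

noncomputable def weightSeries : ((ι → ℕ) → ℚ) →ₗ[ℚ] PowerSeries ℚ where
  toFun f := PowerSeries.mk fun n => ∑ c ∈ weightSlice d n, f c
  map_add' f f' := by ext n; simp [sum_add_distrib]
  map_smul' r f := by ext n; simp [mul_sum]

theorem coeff_weightSeries (f : (ι → ℕ) → ℚ) (n : ℕ) :
    coeff n (weightSeries d f) = ∑ c ∈ weightSlice d n, f c :=
  coeff_mk n fun n => ∑ c ∈ weightSlice d n, f c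

variable {d}

theorem weightSeries_ite_le (hd : ∀ i, 0 < d i) (m : ι → ℕ) :
    weightSeries d (fun c => if m ≤ c then 1 else 0) = X ^ (m ⬝ᵥ d) * weightSeries d 1 := by
  ext n
  simp only [coeff_weightSeries, coeff_X_pow_mul', sum_boole, Pi.one_apply, sum_const,
    nsmul_eq_mul, mul_one]
  split_ifs with hmn
  · congr 1
    refine card_nbij' (· - m) (· + m) (fun c hc => ?_) (fun c hc => ?_) (fun c hc => ?_)
      (fun c _ => add_tsub_cancel_right c m)
    · obtain ⟨hc, hmc⟩ := mem_filter.1 (mem_coe.1 hc)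
      have hsplit := congrArg (· ⬝ᵥ d) (tsub_add_cancel_of_le hmc)
      simp only [add_dotProduct] at hsplit
      rw [mem_weightSlice hd] at hc
      rw [mem_coe, mem_weightSlice hd]
      dsimp only
      omega
    · rw [mem_coe, mem_weightSlice hd] at hc
      refine mem_filter.2 ⟨(mem_weightSlice hd).2 ?_, le_add_self⟩
      rw [add_dotProduct]
      omega
    · exact tsub_add_cancel_of_le (mem_filter.1 hc).2
  · rw [Nat.cast_eq_zero, card_eq_zero, filter_eq_empty_iff]
    intro c hc hmc
    rw [mem_weightSlice hd] at hc
    exact hmn (hc ▸ dotProduct_le_dotProduct_of_nonneg_right hmc fun i => Nat.zero_le _)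

theorem exists_weightSeries_prod_eq_mul (hd : ∀ i, 0 < d i) (F : Finset (ι → ℕ)) :
    ∃ p : Polynomial ℚ, weightSeries d (fun c => ∏ m ∈ F, (1 - if m ≤ c then 1 else 0)) =
      p * weightSeries d 1 := by
  refine ⟨∑ S ∈ F.powerset, Polynomial.C ((-1) ^ #S) * Polynomial.X ^ (S.sup id ⬝ᵥ d), ?_⟩
  have hexpand : (fun c => ∏ m ∈ F, (1 - if m ≤ c then (1 : ℚ) else 0)) =
      ∑ S ∈ F.powerset, (-1 : ℚ) ^ #S • fun c => if S.sup id ≤ c then 1 else 0 := by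
    ext c
    simp [prod_one_sub_ite_le]
  rw [hexpand, map_sum, ← Polynomial.coeToPowerSeries.ringHom_apply, map_sum, sum_mul]
  refine sum_congr rfl fun S _ => ?_
  rw [map_smul, weightSeries_ite_le hd]
  simp [smul_eq_C_mul, mul_assoc]

theorem weightSeries_ite_mem_Iic_zero (hd : ∀ i, 0 < d i) :
    weightSeries d (fun c => if c ∈ Set.Iic 0 then 1 else 0) = 1 := by
  ext n
  simp [coeff_weightSeries, coeff_one, mem_weightSlice hd, eq_comm]

theorem IsLowerSet.exists_weightSeries_eq_mul (hd : ∀ i, 0 < d i) {A : Set (ι → ℕ)}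
    (hA : IsLowerSet A) :
    ∃ p : Polynomial ℚ, weightSeries d (fun c => if c ∈ A then 1 else 0) = p * weightSeries d 1 := by
  obtain ⟨F, hF⟩ := hA.exists_finset_mem_iff
  obtain ⟨p, hp⟩ := exists_weightSeries_prod_eq_mul hd F
  refine ⟨p, Eq.trans (congrArg _ (funext fun c => ?_)) hp⟩
  simp only [hF c, ← prod_boole]
  exact prod_congr rfl fun m _ => by split_ifs <;> simp

theorem exists_polynomial_mul_weightSeries_one (hd : ∀ i, 0 < d i) :
    ∃ q : Polynomial ℚ, q * weightSeries d 1 = 1 := by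
  obtain ⟨q, hq⟩ := (isLowerSet_Iic (0 : ι → ℕ)).exists_weightSeries_eq_mul hd
  exact ⟨q, hq ▸ weightSeries_ite_mem_Iic_zero hd⟩

theorem IsLowerSet.isRational_weightSeries (hd : ∀ i, 0 < d i) {A : Set (ι → ℕ)}
    (hA : IsLowerSet A) : (weightSeries d fun c => if c ∈ A then 1 else 0).IsRational := by
  obtain ⟨p, hp⟩ := hA.exists_weightSeries_eq_mul hd
  obtain ⟨q, hq⟩ := exists_polynomial_mul_weightSeries_one hd
  refine ⟨p, q, fun h0 => ?_, by rw [hp, mul_left_comm, hq, mul_one]⟩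
  simpa [h0] using congrArg constantCoeff hq

end WeightSeries

section HilbertSeries

variable {X ι : Type*} [AddCommMonoid X] [Fintype ι] [LinearOrder ι] (g : ι → X)

def lexMinReps : Set (ι → ℕ) :=
  {c | ∀ c', Fintype.linearCombination ℕ g c' = Fintype.linearCombination ℕ g c →
    toLex c ≤ toLex c'}

theorem isLowerSet_lexMinReps : IsLowerSet (lexMinReps g) := by
  intro c c' hle hc c'' heq
  by_contra! hlt
  obtain ⟨e, rfl⟩ := exists_add_of_le hle
  refine (hc (c'' + e) (by simp [heq])).not_gt ?_
  rw [toLex_add, toLex_add]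
  exact add_lt_add_left hlt _

variable {g}

theorem existsUnique_mem_lexMinReps (hg : AddSubmonoid.closure (Set.range g) = ⊤) (x : X) :
    ∃! c, c ∈ lexMinReps g ∧ Fintype.linearCombination ℕ g c = x := by
  obtain ⟨c, hc⟩ : x ∈ LinearMap.range (Fintype.linearCombination ℕ g) := by
    rw [Fintype.range_linearCombination, ← Submodule.mem_toAddSubmonoid,
      Submodule.span_nat_eq_addSubmonoidClosure, hg]
    trivial
  obtain ⟨l, hl, hmin⟩ := (wellFounded_lt (α := Lex (ι → ℕ))).has_min
    {l | Fintype.linearCombination ℕ g (ofLex l) = x} ⟨toLex c, hc⟩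
  refine ⟨ofLex l, ⟨fun c' hc' => not_lt.1 (hmin (toLex c') (hc'.trans hl)), hl⟩, ?_⟩
  rintro c' ⟨hc', rfl⟩
  exact toLex.injective (le_antisymm (hc' _ hl) (not_lt.1 (hmin (toLex c') rfl)))

theorem card_degree_eq_card_lexMinReps (deg : X →+ ℕ)
    (hg : AddSubmonoid.closure (Set.range g) = ⊤) (hd : ∀ i, 0 < deg (g i)) (n : ℕ) :
    Nat.card {x // deg x = n} = #{c ∈ weightSlice (deg ∘ g) n | c ∈ lexMinReps g} := by
  have hdeg : ∀ c, deg (Fintype.linearCombination ℕ g c) = c ⬝ᵥ (deg ∘ g) := fun c => by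
    simp [Fintype.linearCombination_apply, dotProduct]
  rw [← Nat.card_eq_finsetCard]
  refine (Nat.card_eq_of_bijective (fun c => ⟨Fintype.linearCombination ℕ g c,
    (hdeg c).trans ((mem_weightSlice hd).1 (mem_filter.1 c.2).1)⟩) ⟨?_, ?_⟩).symm
  · rintro ⟨c, hc⟩ ⟨c', hc'⟩ h
    exact Subtype.ext ((existsUnique_mem_lexMinReps hg _).unique ⟨(mem_filter.1 hc).2, rfl⟩
      ⟨(mem_filter.1 hc').2, (congrArg Subtype.val h).symm⟩)
  · rintro ⟨x, hx⟩
    obtain ⟨c, ⟨hc, rfl⟩, -⟩ := existsUnique_mem_lexMinReps hg x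
    exact ⟨⟨c, mem_filter.2 ⟨(mem_weightSlice hd).2 ((hdeg c).symm.trans hx), hc⟩⟩, rfl⟩

theorem isRational_hilbertSeries_of_closure_range_eq_top (deg : X →+ ℕ)
    (hg : AddSubmonoid.closure (Set.range g) = ⊤) (hd : ∀ i, 0 < deg (g i)) :
    (PowerSeries.mk fun n => (Nat.card {x // deg x = n} : ℚ)).IsRational := by
  convert (isLowerSet_lexMinReps g).isRational_weightSeries (d := deg ∘ g) hd using 1
  ext n
  rw [coeff_mk, coeff_weightSeries, card_degree_eq_card_lexMinReps deg hg hd, sum_boole]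

end HilbertSeries

theorem AddMonoid.FG.isRational_hilbertSeries {X : Type*} [AddCommMonoid X] (hX : AddMonoid.FG X)
    (deg : X →+ ℕ) (hdeg : ∀ x, deg x = 0 → x = 0) :
    (PowerSeries.mk fun n => (Nat.card {x // deg x = n} : ℚ)).IsRational := by
  obtain ⟨S, hS, hfin⟩ := AddMonoid.fg_iff.1 hX
  obtain ⟨r, g, hg⟩ := (hfin.sdiff (t := {0})).fin_embedding
  refine isRational_hilbertSeries_of_closure_range_eq_top (g := g) deg ?_ fun i => ?_
  · rw [hg, ← AddSubmonoid.closure_insert_zero, Set.insert_sdiff_singleton,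
      AddSubmonoid.closure_insert_zero, hS]
  · have hi : g i ∈ S \ {0} := hg ▸ Set.mem_range_self i
    exact Nat.pos_of_ne_zero fun h => hi.2 (hdeg _ h)

theorem eq_zero_of_forall_add_smul_mem {E : Type*} [NormedAddCommGroup E] [NormedSpace ℝ E]
    {S : Set E} (hS : Bornology.IsBounded S) {x u : E} (h : ∀ t : ℝ, 0 ≤ t → x + t • u ∈ S) :
    u = 0 := by
  obtain ⟨C, hC⟩ := hS.exists_norm_le
  by_contra hu
  have hu : 0 < ‖u‖ := norm_pos_iff.2 hu
  have hx : ‖x‖ ≤ C := by simpa using hC _ (h 0 le_rfl)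
  have ht : 0 ≤ (C + ‖x‖ + 1) / ‖u‖ := div_nonneg (by linarith [norm_nonneg x]) hu.le
  have hray := hC _ (h _ ht)
  have htri : ‖((C + ‖x‖ + 1) / ‖u‖) • u‖ ≤ ‖x + ((C + ‖x‖ + 1) / ‖u‖) • u‖ + ‖x‖ := by
    simpa using norm_sub_le (x + ((C + ‖x‖ + 1) / ‖u‖) • u) x
  rw [norm_smul, Real.norm_of_nonneg ht, div_mul_cancel₀ _ hu.ne'] at htri
  linarith

section LatticePoints

variable {k s : ℕ} (v : Fin s → Fin k → ℤ) (a : Fin s → ℤ)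

def polyhedron : Set (Fin k → ℝ) := {u | ∀ i, -(a i : ℝ) ≤ ∑ j, u j * (v i j : ℝ)}

def latticePoints (n : ℕ) : Set (Fin k → ℤ) := {u | ∀ i, -((n : ℤ) * a i) ≤ u ⬝ᵥ v i}

theorem latticePoints_eq_empty {n : ℕ} (hn : 0 < n) (h : polyhedron v a = ∅) :
    latticePoints v a n = ∅ := by
  refine Set.eq_empty_of_forall_notMem fun u hu => ?_
  have hmem : (n : ℝ)⁻¹ • (Int.cast ∘ u) ∈ polyhedron v a := fun i => by
    have hi : -((n : ℝ) * a i) ≤ ∑ j, (u j : ℝ) * v i j := by exact_mod_cast hu i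
    simp only [Pi.smul_apply, Function.comp_apply, smul_eq_mul, mul_assoc, ← mul_sum]
    rw [le_inv_mul_iff₀ (Nat.cast_pos.2 hn)]
    linarith
  rwa [h] at hmem

variable {v a}

theorem eq_zero_of_forall_nonneg_dotProduct
    (hbdd : Bornology.IsBounded (polyhedron v a)) {x₀ : Fin k → ℝ} (hx₀ : x₀ ∈ polyhedron v a)
    {u : Fin k → ℤ} (hu : ∀ i, 0 ≤ u ⬝ᵥ v i) : u = 0 := by
  have hcast : (Int.cast ∘ u : Fin k → ℝ) = 0 := by
    refine eq_zero_of_forall_add_smul_mem hbdd (x := x₀) fun t ht i => ?_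
    have hui : (0 : ℝ) ≤ ∑ j, (u j : ℝ) * v i j := by exact_mod_cast hu i
    simp only [Pi.add_apply, Pi.smul_apply, Function.comp_apply, smul_eq_mul, add_mul,
      sum_add_distrib, mul_assoc, ← mul_sum]
    nlinarith [hx₀ i, mul_nonneg ht hui]
  exact funext fun j => (Int.cast_eq_zero (α := ℝ)).1 (congrFun hcast j)

variable (v a)

def slackMonoid : AddSubmonoid (ℕ × (Fin s → ℕ)) where
  carrier := {y | ∃ u : Fin k → ℤ, ∀ i, (y.2 i : ℤ) = u ⬝ᵥ v i + y.1 * a i}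
  add_mem' := by
    rintro y y' ⟨u, hu⟩ ⟨u', hu'⟩
    exact ⟨u + u', fun i => by simp [hu, hu', add_dotProduct]; ring⟩
  zero_mem' := ⟨0, by simp⟩

theorem fg_slackMonoid : AddMonoid.FG (slackMonoid v a) := by
  rw [AddMonoid.fg_iff_addSubmonoid_fg]
  refine AddSubmonoid.fg_of_subtractive ?_
  rintro y ⟨u, hu⟩ z ⟨w, hw⟩
  refine ⟨w - u, fun i => ?_⟩
  have hwi := hw i
  simp only [Prod.snd_add, Prod.fst_add, Pi.add_apply, Nat.cast_add, hu i] at hwi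
  rw [sub_dotProduct]
  linarith

def slackDegree : slackMonoid v a →+ ℕ :=
  (AddMonoidHom.fst ℕ (Fin s → ℕ)).comp (slackMonoid v a).subtype

variable {v a}

theorem eq_zero_of_slackDegree_eq_zero (hrec : ∀ u : Fin k → ℤ, (∀ i, 0 ≤ u ⬝ᵥ v i) → u = 0)
    (y : slackMonoid v a) (hy : slackDegree v a y = 0) : y = 0 := by
  obtain ⟨⟨n, σ⟩, u, hu⟩ := y
  obtain rfl : n = 0 := hy
  obtain rfl : u = 0 := hrec u fun i => by
    have h := hu i
    simp only [Nat.cast_zero, zero_mul, add_zero] at h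
    exact h ▸ Int.natCast_nonneg _
  exact Subtype.ext (Prod.ext rfl (funext fun i => by simpa using hu i))

theorem card_latticePoints_eq_card_slackDegree (hrec : ∀ u : Fin k → ℤ, (∀ i, 0 ≤ u ⬝ᵥ v i) → u = 0) (n : ℕ) :
    Nat.card (latticePoints v a n) = Nat.card {y : slackMonoid v a // slackDegree v a y = n} := by
  refine Nat.card_eq_of_bijective
    (fun u => ⟨⟨(n, fun i => (u.1 ⬝ᵥ v i + n * a i).toNat), u.1, fun i => ?_⟩, rfl⟩) ⟨?_, ?_⟩
  · have hui := u.2 i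
    simp only [Int.toNat_of_nonneg (by omega : 0 ≤ u.1 ⬝ᵥ v i + n * a i)]
  · rintro ⟨u, hu⟩ ⟨u', hu'⟩ h
    have heq : ∀ i, u ⬝ᵥ v i = u' ⬝ᵥ v i := fun i => by
      have hi : (u ⬝ᵥ v i + n * a i).toNat = (u' ⬝ᵥ v i + n * a i).toNat :=
        congrArg (fun y => y.1.1.2 i) h
      have := hu i
      have := hu' i
      omega
    exact Subtype.ext (sub_eq_zero.1 (hrec _ fun i => by rw [sub_dotProduct, heq, sub_self]))
  · rintro ⟨⟨⟨m, σ⟩, w, hw⟩, hm⟩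
    obtain rfl : m = n := hm
    refine ⟨⟨w, fun i => ?_⟩, Subtype.ext (Subtype.ext (Prod.ext rfl (funext fun i => ?_)))⟩
    · have hwi : (σ i : ℤ) = w ⬝ᵥ v i + m * a i := hw i
      omega
    · simp [← hw i]

end LatticePoints

/-- Let `v₁, …, vₛ ∈ ℤ^k`, `a₁, …, aₛ ∈ ℤ`, and for `n ≥ 0` let
`Pₙ = {u ∈ ℝ^k | ⟨u, vᵢ⟩ ≥ -n·aᵢ for all i}`. If `P₁` is bounded (so each
`Pₙ ∩ ℤ^k` is finite), then the generating function `∑ₙ card(Pₙ ∩ ℤ^k)·tⁿ`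
is a rational power series over `ℚ`. -/
theorem generating_function_of_lattice_point_counts_is_rational
    (k s : ℕ) (v : Fin s → (Fin k → ℤ)) (a : Fin s → ℤ)
    (hbdd : Bornology.IsBounded
      {u : Fin k → ℝ | ∀ i, -(a i : ℝ) ≤ ∑ j, u j * (v i j : ℝ)}) :
    ∃ p q : Polynomial ℚ, q.coeff 0 ≠ 0 ∧
      (q : PowerSeries ℚ) *
        PowerSeries.mk (fun n =>
          (Nat.card {u : Fin k → ℤ | ∀ i, -((n : ℤ) * a i) ≤ ∑ j, u j * v i j} : ℚ)) =
      (p : PowerSeries ℚ) := by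
  change (PowerSeries.mk fun n => (Nat.card (latticePoints v a n) : ℚ)).IsRational
  rcases (polyhedron v a).eq_empty_or_nonempty with hP | ⟨x₀, hx₀⟩
  · refine PowerSeries.isRational_mk_of_forall_pos_eq_zero _ fun n hn => ?_
    simp [latticePoints_eq_empty v a hn hP]
  · have hrec := fun u => eq_zero_of_forall_nonneg_dotProduct (u := u) hbdd hx₀
    simp_rw [card_latticePoints_eq_card_slackDegree hrec]
    exact (fg_slackMonoid v a).isRational_hilbertSeries _ (eq_zero_of_slackDegree_eq_zero hrec)
end
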